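/- Let Q₂ be the symmetric integer matrix ![![0,1,0],![1,0,0],![0,0,-4]] and let g₁ = ![![1,0,0],![2,1,4],![1,0,1]], g₂ = ![![1,2,4],![2,1,4],![-1,-1,-3]], g₃ = ![![0,1,0],![1,0,0],![0,0,1]]. Then each gᵢ satisfies gᵢᵀ · Q₂ · gᵢ = Q₂; moreover, with D = diag(2,2,8), each matrix D·gᵢ·D⁻¹ has integer entries and carries the subgroup Λ = 2ℤ × 2ℤ × 8ℤ of ℤ³ into itself, so induces an automorphism hᵢ of the finite abelian group A = ℤ³/Λ ≅ ℤ/2 × ℤ/2 × ℤ/8; and the subgroup of Aut(A) generated by h₁, h₂, h₃ is isomorphic to the dihedral group of order 8. -/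

import Mathlib

open Matrix

namespace Stmt1

/-- A Gram matrix (up to sign of the rank-one summand) of the lattice `H ⊕ ⟨4⟩`. -/
def Q : Matrix (Fin 3) (Fin 3) ℤ := !![0, 1, 0; 1, 0, 0; 0, 0, -4]

def g1 : Matrix (Fin 3) (Fin 3) ℤ := !![1, 0, 0; 2, 1, 4; 1, 0, 1]

def g2 : Matrix (Fin 3) (Fin 3) ℤ := !![1, 2, 4; 2, 1, 4; -1, -1, -3]

def g3 : Matrix (Fin 3) (Fin 3) ℤ := !![0, 1, 0; 1, 0, 0; 0, 0, 1]

/-- `D = diag(2, 2, 8)`. -/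
def D : Matrix (Fin 3) (Fin 3) ℤ := Matrix.diagonal ![2, 2, 8]

/-- The subgroup `Λ = 2ℤ × 2ℤ × 8ℤ` of `ℤ³`. -/
def Λ : AddSubgroup (Fin 3 → ℤ) :=
  AddSubgroup.pi Set.univ fun i => AddSubgroup.zmultiples (![(2 : ℤ), 2, 8] i)

/-- The finite abelian group `A = ℤ³/Λ`. -/
abbrev A : Type := (Fin 3 → ℤ) ⧸ Λ

abbrev B : Type := ZMod 2 × ZMod 2 × ZMod 8

def Mat1 : Matrix (Fin 3) (Fin 3) ℤ := !![1,0,0; 2,1,1; 4,0,1]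
def Nat1 : Matrix (Fin 3) (Fin 3) ℤ := !![1,0,0; 2,1,-1; -4,0,1]
def Mat2 : Matrix (Fin 3) (Fin 3) ℤ := !![1,2,1; 2,1,1; -4,-4,-3]
def Mat3 : Matrix (Fin 3) (Fin 3) ℤ := !![0,1,0; 1,0,0; 0,0,1]

lemma mem_Lam {v : Fin 3 → ℤ} : v ∈ Λ ↔ (2:ℤ) ∣ v 0 ∧ (2:ℤ) ∣ v 1 ∧ (8:ℤ) ∣ v 2 := by
  simp only [Λ, AddSubgroup.mem_pi, Set.mem_univ, forall_true_left, Int.mem_zmultiples_iff]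
  constructor
  · intro h; exact ⟨by simpa using h 0, by simpa using h 1, by simpa using h 2⟩
  · rintro ⟨h0,h1,h2⟩ i; fin_cases i <;> simpa

lemma mulVec3 (M : Matrix (Fin 3) (Fin 3) ℤ) (v : Fin 3 → ℤ) (i : Fin 3) :
    M.mulVec v i = M i 0 * v 0 + M i 1 * v 1 + M i 2 * v 2 := by
  simp [Matrix.mulVec, dotProduct, Fin.sum_univ_three]

lemma presMat1 : ∀ v ∈ Λ, Mat1.mulVec v ∈ Λ := by
  intro v hv
  rw [mem_Lam] at hv ⊢
  obtain ⟨h0, h1, h2⟩ := hv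
  refine ⟨?_, ?_, ?_⟩ <;> rw [mulVec3] <;>
    simp [Mat1, Matrix.cons_val_two, Matrix.tail_cons, Matrix.vecHead, Matrix.vecTail] <;> omega

lemma presNat1 : ∀ v ∈ Λ, Nat1.mulVec v ∈ Λ := by
  intro v hv
  rw [mem_Lam] at hv ⊢
  obtain ⟨h0, h1, h2⟩ := hv
  refine ⟨?_, ?_, ?_⟩ <;> rw [mulVec3] <;>
    simp [Nat1, Matrix.cons_val_two, Matrix.tail_cons, Matrix.vecHead, Matrix.vecTail] <;> omega

lemma presMat2 : ∀ v ∈ Λ, Mat2.mulVec v ∈ Λ := by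
  intro v hv
  rw [mem_Lam] at hv ⊢
  obtain ⟨h0, h1, h2⟩ := hv
  refine ⟨?_, ?_, ?_⟩ <;> rw [mulVec3] <;>
    simp [Mat2, Matrix.cons_val_two, Matrix.tail_cons, Matrix.vecHead, Matrix.vecTail] <;> omega

lemma presMat3 : ∀ v ∈ Λ, Mat3.mulVec v ∈ Λ := by
  intro v hv
  rw [mem_Lam] at hv ⊢
  obtain ⟨h0, h1, h2⟩ := hv
  refine ⟨?_, ?_, ?_⟩ <;> rw [mulVec3] <;>
    simp [Mat3, Matrix.cons_val_two, Matrix.tail_cons, Matrix.vecHead, Matrix.vecTail] <;> omega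

def Mhom (M : Matrix (Fin 3) (Fin 3) ℤ) : (Fin 3 → ℤ) →+ (Fin 3 → ℤ) :=
  (Matrix.mulVecLin M).toAddMonoidHom

lemma Mhom_apply (M : Matrix (Fin 3) (Fin 3) ℤ) (v : Fin 3 → ℤ) :
    Mhom M v = M.mulVec v := rfl

def qmap (M : Matrix (Fin 3) (Fin 3) ℤ) (h : ∀ v ∈ Λ, M.mulVec v ∈ Λ) : A →+ A :=
  QuotientAddGroup.map Λ Λ (Mhom M) (fun v hv => h v hv)

lemma qmap_mk (M : Matrix (Fin 3) (Fin 3) ℤ) (h : ∀ v ∈ Λ, M.mulVec v ∈ Λ)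
    (v : Fin 3 → ℤ) :
    qmap M h (QuotientAddGroup.mk v) = QuotientAddGroup.mk (M.mulVec v) :=
  QuotientAddGroup.map_mk _ _ _ _ _

def mkAut (M N : Matrix (Fin 3) (Fin 3) ℤ) (hM : ∀ v ∈ Λ, M.mulVec v ∈ Λ)
    (hN : ∀ v ∈ Λ, N.mulVec v ∈ Λ) (hNM : N * M = 1) (hMN : M * N = 1) : AddAut A where
  toFun := qmap M hM
  invFun := qmap N hN
  left_inv := by
    intro a
    induction a using QuotientAddGroup.induction_on with
    | H v => rw [qmap_mk, qmap_mk, Matrix.mulVec_mulVec, hNM, Matrix.one_mulVec]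
  right_inv := by
    intro a
    induction a using QuotientAddGroup.induction_on with
    | H v => rw [qmap_mk, qmap_mk, Matrix.mulVec_mulVec, hMN, Matrix.one_mulVec]
  map_add' := map_add _

def h1 : AddAut A := mkAut Mat1 Nat1 presMat1 presNat1 (by decide) (by decide)
def h2 : AddAut A := mkAut Mat2 Mat2 presMat2 presMat2 (by decide) (by decide)
def h3 : AddAut A := mkAut Mat3 Mat3 presMat3 presMat3 (by decide) (by decide)

lemma h1_mk (v : Fin 3 → ℤ) :
    h1 (QuotientAddGroup.mk v) = QuotientAddGroup.mk (Mat1.mulVec v) := qmap_mk Mat1 presMat1 v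
lemma h2_mk (v : Fin 3 → ℤ) :
    h2 (QuotientAddGroup.mk v) = QuotientAddGroup.mk (Mat2.mulVec v) := qmap_mk Mat2 presMat2 v
lemma h3_mk (v : Fin 3 → ℤ) :
    h3 (QuotientAddGroup.mk v) = QuotientAddGroup.mk (Mat3.mulVec v) := qmap_mk Mat3 presMat3 v

def ψ : (Fin 3 → ℤ) →+ B where
  toFun v := ((v 0 : ZMod 2), (v 1 : ZMod 2), (v 2 : ZMod 8))
  map_zero' := by simp
  map_add' v w := by simp [Prod.ext_iff]

lemma hker : Λ = ψ.ker := by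
  ext v
  rw [mem_Lam, AddMonoidHom.mem_ker]
  simp only [ψ, AddMonoidHom.coe_mk, ZeroHom.coe_mk, Prod.ext_iff, Prod.fst_zero, Prod.snd_zero,
    ZMod.intCast_zmod_eq_zero_iff_dvd]
  norm_num

lemma hsurj : Function.Surjective ψ := by
  rintro ⟨x, y, z⟩
  obtain ⟨a, rfl⟩ := ZMod.intCast_surjective x
  obtain ⟨b, rfl⟩ := ZMod.intCast_surjective y
  obtain ⟨c, rfl⟩ := ZMod.intCast_surjective z
  exact ⟨![a,b,c], by simp [ψ]⟩

noncomputable def e : A ≃+ B :=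
  (QuotientAddGroup.quotientAddEquivOfEq hker).trans
    (QuotientAddGroup.quotientKerEquivOfSurjective ψ hsurj)

lemma e_mk (v : Fin 3 → ℤ) : e (QuotientAddGroup.mk v) = ψ v := by
  simp [e, QuotientAddGroup.quotientKerEquivOfSurjective]

def cf (w : ZMod 8) : ZMod 2 := (w.val : ZMod 2)
def mf (a : ZMod 2) : ZMod 8 := 4 * (a.val : ZMod 8)

def t1 : B → B := fun p => (p.1, p.2.1 + cf p.2.2, p.2.2 + mf p.1)
def t2 : B → B := fun p => (p.1 + cf p.2.2, p.2.1 + cf p.2.2, mf p.1 + mf p.2.1 + 5 * p.2.2)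
def t3 : B → B := fun p => (p.2.1, p.1, p.2.2)

def f1 : AddAut B :=
  { toFun := t1, invFun := t1, left_inv := by decide, right_inv := by decide,
    map_add' := by decide }
def f2 : AddAut B :=
  { toFun := t2, invFun := t2, left_inv := by decide, right_inv := by decide,
    map_add' := by decide }
def f3 : AddAut B :=
  { toFun := t3, invFun := t3, left_inv := by decide, right_inv := by decide,
    map_add' := by decide }

instance : DecidableEq (AddAut B) := fun f g =>
  decidable_of_iff (∀ x, f x = g x) DFunLike.ext_iff.symm

lemma fpsi_eq (f : AddAut B) (M : Matrix (Fin 3) (Fin 3) ℤ)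
    (h : ∀ i : Fin 3, f (ψ (Pi.single i 1)) = ψ (M.mulVec (Pi.single i 1))) :
    ∀ v, f (ψ v) = ψ (M.mulVec v) := by
  have key : f.toAddMonoidHom.comp ψ = ψ.comp (Mhom M) := by
    apply AddMonoidHom.functions_ext
    intro i x
    have hh : (f.toAddMonoidHom.comp ψ).comp (AddMonoidHom.single (fun _ => ℤ) i)
        = (ψ.comp (Mhom M)).comp (AddMonoidHom.single (fun _ => ℤ) i) :=
      AddMonoidHom.ext_int (by simpa [Mhom_apply] using h i)
    simpa [Mhom_apply] using DFunLike.congr_fun hh x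
  intro v
  simpa [Mhom_apply] using DFunLike.congr_fun key v

lemma hcomp1 : ∀ v, f1 (ψ v) = ψ (Mat1.mulVec v) := fpsi_eq f1 Mat1 (by decide)
lemma hcomp2 : ∀ v, f2 (ψ v) = ψ (Mat2.mulVec v) := fpsi_eq f2 Mat2 (by decide)
lemma hcomp3 : ∀ v, f3 (ψ v) = ψ (Mat3.mulVec v) := fpsi_eq f3 Mat3 (by decide)

noncomputable def Phi : AddAut A ≃+ AddAut B where
  toFun g := e.symm.trans (g.trans e)
  invFun g := e.trans (g.trans e.symm)
  left_inv g := by apply AddEquiv.ext; intro a; simp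
  right_inv g := by apply AddEquiv.ext; intro b; simp
  map_add' g h := by apply AddEquiv.ext; intro b; simp [AddAut.add_apply]

lemma Phi_apply (g : AddAut A) (b : B) : Phi g b = e (g (e.symm b)) := rfl

lemma Phi_h1 : Phi h1 = f1 := by
  apply AddEquiv.ext
  intro b
  obtain ⟨a, rfl⟩ := e.surjective b
  induction a using QuotientAddGroup.induction_on with
  | H v =>
    rw [Phi_apply, AddEquiv.symm_apply_apply, h1_mk, e_mk, e_mk, hcomp1]

lemma Phi_h2 : Phi h2 = f2 := by
  apply AddEquiv.ext
  intro b
  obtain ⟨a, rfl⟩ := e.surjective b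
  induction a using QuotientAddGroup.induction_on with
  | H v =>
    rw [Phi_apply, AddEquiv.symm_apply_apply, h2_mk, e_mk, e_mk, hcomp2]

lemma Phi_h3 : Phi h3 = f3 := by
  apply AddEquiv.ext
  intro b
  obtain ⟨a, rfl⟩ := e.surjective b
  induction a using QuotientAddGroup.induction_on with
  | H v =>
    rw [Phi_apply, AddEquiv.symm_apply_apply, h3_mk, e_mk, e_mk, hcomp3]

def R : AddAut B := f3 + f1

def phifun : DihedralGroup 4 → AddAut B
  | .r i => i.val • R
  | .sr i => f3 + i.val • R

def phi : Additive (DihedralGroup 4) →+ AddAut B where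
  toFun x := phifun x.toMul
  map_zero' := by decide
  map_add' := by decide

lemma phi_inj : Function.Injective phi := by
  have : ∀ a b : Additive (DihedralGroup 4), phi a = phi b → a = b := by decide
  exact fun a b => this a b

lemma phi_range : phi.range = AddSubgroup.closure {f1, f2, f3} := by
  apply le_antisymm
  · rintro x ⟨g, rfl⟩
    have hf1 : f1 ∈ AddSubgroup.closure {f1, f2, f3} := AddSubgroup.subset_closure (by simp)
    have hf3 : f3 ∈ AddSubgroup.closure {f1, f2, f3} := AddSubgroup.subset_closure (by simp)
    have hR : R ∈ AddSubgroup.closure {f1, f2, f3} := add_mem hf3 hf1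
    change phifun g.toMul ∈ _
    cases g.toMul with
    | r i => exact nsmul_mem hR _
    | sr i => exact add_mem hf3 (nsmul_mem hR _)
  · rw [AddSubgroup.closure_le]
    rintro x hx
    simp only [Set.mem_insert_iff, Set.mem_singleton_iff] at hx
    rcases hx with rfl | rfl | rfl
    · exact ⟨Additive.ofMul (.sr 1), by decide⟩
    · exact ⟨Additive.ofMul (.r 2), by decide⟩
    · exact ⟨Additive.ofMul (.sr 0), by decide⟩

noncomputable def isoS : (AddSubgroup.closure {f1, f2, f3} : AddSubgroup (AddAut B)) ≃+ Additive (DihedralGroup 4) :=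
  ((AddMonoidHom.ofInjective phi_inj).trans (AddEquiv.addSubgroupCongr phi_range)).symm

lemma hmapK :
    (AddSubgroup.closure {h1, h2, h3} : AddSubgroup (AddAut A)).map Phi.toAddMonoidHom
      = AddSubgroup.closure {f1, f2, f3} := by
  rw [AddMonoidHom.map_closure]
  congr 1
  simp [Set.image_insert_eq, Phi_h1, Phi_h2, Phi_h3]

noncomputable def isoK :
    (AddSubgroup.closure {h1, h2, h3} : AddSubgroup (AddAut A)) ≃+ Additive (DihedralGroup 4) :=
  ((Phi.addSubgroupMap _).trans (AddEquiv.addSubgroupCongr hmapK)).trans isoS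


theorem statement1 :
    (g1ᵀ * Q * g1 = Q ∧ g2ᵀ * Q * g2 = Q ∧ g3ᵀ * Q * g3 = Q) ∧
    Nonempty (A ≃+ ZMod 2 × ZMod 2 × ZMod 8) ∧
    ∃ M1 M2 M3 : Matrix (Fin 3) (Fin 3) ℤ,
      -- `Mᵢ` is the (integral) matrix `D·gᵢ·D⁻¹`
      M1 * D = D * g1 ∧ M2 * D = D * g2 ∧ M3 * D = D * g3 ∧
      -- each `D·gᵢ·D⁻¹` carries `Λ` into itself
      (∀ v ∈ Λ, M1.mulVec v ∈ Λ) ∧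
      (∀ v ∈ Λ, M2.mulVec v ∈ Λ) ∧
      (∀ v ∈ Λ, M3.mulVec v ∈ Λ) ∧
      -- hence induces automorphisms `hᵢ` of `A`
      ∃ h1 h2 h3 : AddAut A,
        (∀ v : Fin 3 → ℤ,
            h1 (QuotientAddGroup.mk v) = QuotientAddGroup.mk (M1.mulVec v)) ∧
        (∀ v : Fin 3 → ℤ,
            h2 (QuotientAddGroup.mk v) = QuotientAddGroup.mk (M2.mulVec v)) ∧
        (∀ v : Fin 3 → ℤ,
            h3 (QuotientAddGroup.mk v) = QuotientAddGroup.mk (M3.mulVec v)) ∧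
        -- the subgroup generated by `h₁, h₂, h₃` is isomorphic to the
        -- dihedral group of order 8
        Nonempty ((AddSubgroup.closure {h1, h2, h3} : AddSubgroup (AddAut A)) ≃+
            Additive (DihedralGroup 4)) := by
  refine ⟨⟨by decide, by decide, by decide⟩, ⟨e⟩, Mat1, Mat2, Mat3,
    by decide, by decide, by decide, presMat1, presMat2, presMat3,
    h1, h2, h3, h1_mk, h2_mk, h3_mk, ⟨isoK⟩⟩

end Stmt1
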